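/- arXiv:1801.06497 — 2 statements merged into one kernel-verified Lean document; each statement's English description precedes it below -/
import Mathlib

section
/- Let ⊑ be a reduction concept on Baire space that extends Turing reducibility and is closed under composition. Then B(∈*) ⊆ B(≤*): if there is a slalom σ with σ ⊑ x such that every basic real is eventually captured by σ, then there is y ⊑ x such that every basic real is eventually dominated by y. -/
/-- Partial functions `ℕ →. ℕ` computable relative to an oracle `O : ℕ → ℕ`
(Turing reducibility, defined as in `Nat.Partrec` with an extra oracle clause). -/
inductive OracleRecursiveIn (O : ℕ → ℕ) : (ℕ →. ℕ) → Prop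
  | oracle : OracleRecursiveIn O (fun n => Part.some (O n))
  | zero : OracleRecursiveIn O (pure 0)
  | succ : OracleRecursiveIn O (fun n => Part.some (Nat.succ n))
  | left : OracleRecursiveIn O (fun n : ℕ => Part.some n.unpair.1)
  | right : OracleRecursiveIn O (fun n : ℕ => Part.some n.unpair.2)
  | pair {f g : ℕ →. ℕ} : OracleRecursiveIn O f → OracleRecursiveIn O g →
      OracleRecursiveIn O (fun n => Nat.pair <$> f n <*> g n)
  | comp {f g : ℕ →. ℕ} : OracleRecursiveIn O f → OracleRecursiveIn O g →
      OracleRecursiveIn O (fun n => g n >>= f)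
  | prec {f g : ℕ →. ℕ} : OracleRecursiveIn O f → OracleRecursiveIn O g →
      OracleRecursiveIn O (Nat.unpaired fun a n =>
        n.rec (f a) fun y IH => do let i ← IH; g (Nat.pair a (Nat.pair y i)))
  | rfind {f : ℕ →. ℕ} : OracleRecursiveIn O f →
      OracleRecursiveIn O (fun a => Nat.rfind fun n => (fun m => m = 0) <$> f (Nat.pair a n))

/-- Turing reducibility `f ≤ᵀ g` for total functions on `ℕ`. -/
def TuringLE (f g : ℕ → ℕ) : Prop :=
  OracleRecursiveIn g (fun n => Part.some (f n))

/-- The constant zero function, the distinguished point `0` of Baire space. -/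
def baireZero : ℕ → ℕ := fun _ => 0

section
variable (r : (ℕ → ℕ) → (ℕ → ℕ) → Prop)

/-- `y` is basic (for the reduction concept `⊑` = `r`) if `y ⊑ 0`. -/
def IsBasic (y : ℕ → ℕ) : Prop := r y baireZero

/-- `f ≤* g` : eventual domination. -/
def EvDom (f g : ℕ → ℕ) : Prop := ∃ N, ∀ n ≥ N, f n ≤ g n

/-- `f ≠* g` : eventual difference. -/
def EvDiff (f g : ℕ → ℕ) : Prop := ∃ N, ∀ n ≥ N, f n ≠ g n

/-- An `h`-slalom: `|σ n| ≤ h n` for all `n`. -/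
def IsHSlalom (h : ℕ → ℕ) (σ : ℕ → Finset ℕ) : Prop := ∀ n, (σ n).card ≤ h n

/-- A slalom: `|σ n| ≤ n` for all `n`. -/
def IsSlalom (σ : ℕ → Finset ℕ) : Prop := ∀ n, (σ n).card ≤ n

/-- The real coding a slalom. -/
def slalomCode (σ : ℕ → Finset ℕ) : ℕ → ℕ := fun n => Encodable.encode (σ n)

/-- `f ∈* σ` : `f` is eventually captured by the slalom `σ`. -/
def EvCapt (f : ℕ → ℕ) (σ : ℕ → Finset ℕ) : Prop := ∃ N, ∀ n ≥ N, f n ∈ σ n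

/-- `B(≤*)`: the set of `x` building a real eventually dominating all basic reals. -/
def BLeStar : Set (ℕ → ℕ) := {x | ∃ y, r y x ∧ ∀ z, IsBasic r z → EvDom z y}

/-- `B(≠*)`: the set of `x` building a real eventually different from all basic reals. -/
def BNeStar : Set (ℕ → ℕ) := {x | ∃ y, r y x ∧ ∀ z, IsBasic r z → EvDiff z y}

/-- `B(∈*)`: the set of `x` building a slalom eventually capturing all basic reals. -/
def BInStar : Set (ℕ → ℕ) :=
  {x | ∃ σ : ℕ → Finset ℕ, IsSlalom σ ∧ r (slalomCode σ) x ∧ ∀ z, IsBasic r z → EvCapt z σ}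

/-- `D(≤*)`: the set of `x` building a real not eventually dominated by any basic real. -/
def DLeStar : Set (ℕ → ℕ) := {x | ∃ y, r y x ∧ ∀ z, IsBasic r z → ¬ EvDom y z}

/-- `D(≠*)`: the set of `x` building a real infinitely often equal to every basic real. -/
def DNeStar : Set (ℕ → ℕ) := {x | ∃ y, r y x ∧ ∀ z, IsBasic r z → ¬ EvDiff y z}

/-- `D(∈*)`: the set of `x` building a real not eventually captured by any basic slalom. -/
def DInStar : Set (ℕ → ℕ) :=
  {x | ∃ y, r y x ∧ ∀ σ : ℕ → Finset ℕ, IsSlalom σ → IsBasic r (slalomCode σ) → ¬ EvCapt y σ}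

end

open Encodable

lemma mem_ofNat_le : ∀ (n : ℕ), ∀ m ∈ Denumerable.ofNat (List ℕ) n, m ≤ n := by
  intro n
  induction n using Nat.strong_induction_on with
  | _ n ih =>
    match n with
    | 0 => simp
    | Nat.succ v =>
      intro m hm
      rw [Denumerable.list_ofNat_succ] at hm
      rcases List.mem_cons.mp hm with rfl | hm
      · simpa using le_trans (Nat.unpair_left_le v) (Nat.le_succ v)
      · exact le_trans (ih v.unpair.2 (Nat.lt_succ_of_le (Nat.unpair_right_le v)) m hm)
          (le_trans (Nat.unpair_right_le v) (Nat.le_succ v))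

lemma finset_val_eq (s : Finset ℕ) :
    s.val = ↑(Denumerable.ofNat (List ℕ) (Encodable.encode s)) := by
  have h := Encodable.encodek s.val
  have h2 : (Encodable.encode s : ℕ) = Encodable.encode s.val := rfl
  rw [h2]
  change (decodeMultiset (encode s.val) : Option (Multiset ℕ)) = _ at h
  simp [decodeMultiset, Denumerable.decode_eq_ofNat] at h
  exact h.symm

lemma mem_le_encode_finset (s : Finset ℕ) (m : ℕ) (hm : m ∈ s) : m ≤ Encodable.encode s := by
  have : m ∈ s.val := hm
  rw [finset_val_eq s] at this
  exact mem_ofNat_le _ m (by simpa using this)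

theorem stmt_1 (r : (ℕ → ℕ) → (ℕ → ℕ) → Prop)
    (hrefl : ∀ f, r f f) (htrans : ∀ f g h, r f g → r g h → r f h)
    (hT : ∀ f g, TuringLE f g → r f g)
    (hcomp : ∀ f g h, r f h → r g h → r (f ∘ g) h) :
    BInStar r ⊆ BLeStar r := by
  rintro x ⟨σ, hσ, hcode, hcapt⟩
  refine ⟨slalomCode σ, hcode, fun z hz => ?_⟩
  obtain ⟨N, hN⟩ := hcapt z hz
  exact ⟨N, fun n hn => mem_le_encode_finset (σ n) (z n) (hN n hn)⟩
end

section
/- Let ⊑ be a reduction concept on Baire space that extends Turing reducibility and is closed under composition. Then B(∈*) ⊆ D(≠*): if there is a slalom σ with σ ⊑ x eventually capturing every basic real, then there is g ⊑ x which is equal infinitely often to every basic real. -/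
section AuxProof

open Encodable

private lemma recIn_of_eq {O : ℕ → ℕ} {f g : ℕ →. ℕ} (h : OracleRecursiveIn O f)
    (H : ∀ n, f n = g n) : OracleRecursiveIn O g := (funext H : f = g) ▸ h

private lemma recIn_of_natPartrec {O : ℕ → ℕ} {f : ℕ →. ℕ} (h : Nat.Partrec f) :
    OracleRecursiveIn O f := by
  induction h with
  | zero => exact .zero
  | succ => exact .succ
  | left => exact .left
  | right => exact .right
  | pair _ _ pf pg => exact .pair pf pg
  | comp _ _ pf pg => exact .comp pf pg
  | prec _ _ pf pg => exact .prec pf pg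
  | rfind _ pf => exact .rfind pf

private lemma recIn_total {O g : ℕ → ℕ} (h : Computable g) :
    OracleRecursiveIn O (fun n => Part.some (g n)) := by
  have h' : Nat.Partrec (g : ℕ →. ℕ) := Partrec.nat_iff.mp h
  exact recIn_of_eq (recIn_of_natPartrec h') (fun n => rfl)

private lemma recIn_builder {O A u : ℕ → ℕ} (hA : Computable A) (hu : Computable u) :
    OracleRecursiveIn O (fun m => Part.some (A (Nat.pair m (O (u m))))) := by
  have h1 : OracleRecursiveIn O (fun m => Part.some (O (u m))) :=
    recIn_of_eq (.comp .oracle (recIn_total hu)) (fun n => by simp)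
  have h2 : OracleRecursiveIn O (fun m => Part.some (Nat.pair m (O (u m)))) :=
    recIn_of_eq (.pair (recIn_total Computable.id) h1) (fun n => by simp [Seq.seq])
  exact recIn_of_eq (.comp (recIn_total hA) h2) (fun n => by simp)

/-- step function for the course-of-values recursion -/
private def gstep (z : ℕ → ℕ) (k : ℕ) : ℕ :=
  encode (((decode (α := List ℕ) k.unpair.2.unpair.2).getD []) ++ [z k.unpair.2.unpair.1])

private lemma gstep_recIn (z : ℕ → ℕ) : OracleRecursiveIn z (fun k => Part.some (gstep z k)) := by
  have hu : Computable (fun k : ℕ => k.unpair.2.unpair.1) :=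
    (Primrec.fst.comp (Primrec.unpair.comp (Primrec.snd.comp Primrec.unpair))).to_comp
  have hA : Computable (fun p : ℕ =>
      encode (((decode (α := List ℕ) p.unpair.1.unpair.2.unpair.2).getD []) ++ [p.unpair.2])) := by
    have h1 : Primrec fun p : ℕ => (decode (α := List ℕ) p.unpair.1.unpair.2.unpair.2).getD [] :=
      Primrec.option_getD.comp
        (Primrec.decode.comp (Primrec.snd.comp (Primrec.unpair.comp
          (Primrec.snd.comp (Primrec.unpair.comp (Primrec.fst.comp Primrec.unpair))))))
        (Primrec.const [])
    exact (Primrec.encode.comp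
      (Primrec.list_concat.comp h1 (Primrec.snd.comp Primrec.unpair))).to_comp
  have := recIn_builder (O := z) hA hu
  exact recIn_of_eq this (fun k => by simp [gstep])

private def covP (z : ℕ → ℕ) : ℕ →. ℕ :=
  Nat.unpaired fun a n =>
    n.rec (Part.some (encode ([] : List ℕ))) fun y IH => do
      let i ← IH
      (fun k => Part.some (gstep z k)) (Nat.pair a (Nat.pair y i))

private lemma covP_recIn (z : ℕ → ℕ) : OracleRecursiveIn z (covP z) :=
  OracleRecursiveIn.prec (recIn_total (Computable.const _)) (gstep_recIn z)

private lemma covP_val (z : ℕ → ℕ) (a n : ℕ) :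
    covP z (Nat.pair a n) = Part.some (encode (List.map z (List.range n))) := by
  induction n with
  | zero => simp [covP]
  | succ n ih =>
    simp only [covP, Nat.unpaired, Nat.unpair_pair] at ih ⊢
    rw [ih]
    simp [gstep, List.range_succ]

/-- the blocked version of `z` -/
private def zbar (z : ℕ → ℕ) (n : ℕ) : ℕ :=
  encode (List.map (fun i => z (n * n + i)) (List.range n))

private def A2 (p : ℕ) : ℕ :=
  encode (List.map
    (fun i => ((decode (α := List ℕ) p.unpair.2).getD []).getD (p.unpair.1 * p.unpair.1 + i) 0)
    (List.range p.unpair.1))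

private lemma A2_comp : Computable A2 := by
  have hfst : Primrec fun p : ℕ => p.unpair.1 := Primrec.fst.comp Primrec.unpair
  have hL : Primrec fun q : ℕ × ℕ => (decode (α := List ℕ) q.1.unpair.2).getD [] :=
    Primrec.option_getD.comp
      (Primrec.decode.comp (Primrec.snd.comp (Primrec.unpair.comp Primrec.fst)))
      (Primrec.const [])
  have hidx : Primrec fun q : ℕ × ℕ => q.1.unpair.1 * q.1.unpair.1 + q.2 :=
    Primrec.nat_add.comp
      (Primrec.nat_mul.comp (hfst.comp Primrec.fst) (hfst.comp Primrec.fst)) Primrec.snd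
  exact (Primrec.encode.comp
    (Primrec.list_map (Primrec.list_range.comp hfst)
      (((Primrec.list_getD 0).comp hL hidx).to₂))).to_comp

private lemma zbar_turing (z : ℕ → ℕ) : TuringLE (zbar z) z := by
  have t1 : OracleRecursiveIn z (fun n : ℕ => Part.some (Nat.pair 0 (n * n + n))) :=
    recIn_total ((Primrec₂.natPair.comp (Primrec.const 0)
      (Primrec.nat_add.comp (Primrec.nat_mul.comp Primrec.id Primrec.id) Primrec.id)).to_comp)
  have t2 : OracleRecursiveIn z (fun n : ℕ => Part.some (encode (List.map z (List.range (n * n + n))))) :=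
    recIn_of_eq (.comp (covP_recIn z) t1) (fun n => by
      exact (Part.bind_some _ _).trans (covP_val z 0 (n * n + n)))
  have t3 : OracleRecursiveIn z
      (fun n : ℕ => Part.some (Nat.pair n (encode (List.map z (List.range (n * n + n)))))) :=
    recIn_of_eq (.pair (recIn_total Computable.id) t2) (fun n => by simp [Seq.seq])
  have t4 := OracleRecursiveIn.comp (recIn_total A2_comp) t3
  refine recIn_of_eq t4 (fun n => ?_)
  simp only [Part.bind_eq_bind, Part.bind_some]
  congr 1
  simp only [A2, Nat.unpair_pair, encodek, Option.getD_some]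
  unfold zbar
  refine congrArg _ (List.map_congr_left fun i hi => ?_)
  rw [List.mem_range] at hi
  have hlt : n * n + i < n * n + n := by omega
  simp [List.getD_eq_getElem?_getD, hlt]

/-- the generic real built from the slalom -/
private def yfun (σ : ℕ → Finset ℕ) (m : ℕ) : ℕ :=
  ((decode (α := List ℕ)
      (((decode (α := List ℕ) (slalomCode σ m.sqrt)).getD []).getD (m - m.sqrt * m.sqrt) 0)).getD
    []).getD (m - m.sqrt * m.sqrt) 0

private def A3 (p : ℕ) : ℕ :=
  ((decode (α := List ℕ)
      (((decode (α := List ℕ) p.unpair.2).getD []).getD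
        (p.unpair.1 - p.unpair.1.sqrt * p.unpair.1.sqrt) 0)).getD
    []).getD (p.unpair.1 - p.unpair.1.sqrt * p.unpair.1.sqrt) 0

private lemma A3_comp : Computable A3 := by
  have hm : Primrec fun p : ℕ => p.unpair.1 := Primrec.fst.comp Primrec.unpair
  have hj : Primrec fun p : ℕ => p.unpair.1 - p.unpair.1.sqrt * p.unpair.1.sqrt :=
    Primrec.nat_sub.comp hm
      (Primrec.nat_mul.comp (Primrec.nat_sqrt.comp hm) (Primrec.nat_sqrt.comp hm))
  have hL : Primrec fun p : ℕ => (decode (α := List ℕ) p.unpair.2).getD [] :=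
    Primrec.option_getD.comp (Primrec.decode.comp (Primrec.snd.comp Primrec.unpair))
      (Primrec.const [])
  have hc : Primrec fun p : ℕ =>
      ((decode (α := List ℕ) p.unpair.2).getD []).getD
        (p.unpair.1 - p.unpair.1.sqrt * p.unpair.1.sqrt) 0 :=
    (Primrec.list_getD 0).comp hL hj
  exact (((Primrec.list_getD 0).comp
    (Primrec.option_getD.comp (Primrec.decode.comp hc) (Primrec.const [])) hj)).to_comp

private lemma yfun_turing (σ : ℕ → Finset ℕ) : TuringLE (yfun σ) (slalomCode σ) := by
  have := recIn_builder (O := slalomCode σ) A3_comp (Primrec.nat_sqrt.to_comp)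
  exact recIn_of_eq this (fun m => by simp [A3, yfun])

private lemma finset_decode (s : Finset ℕ) :
    ∃ L : List ℕ, decode (α := List ℕ) (encode s) = some L ∧
      L.length = s.card ∧ ∀ a, a ∈ L ↔ a ∈ s := by
  have hes : (encode s : ℕ) = encode s.val := rfl
  have h : decode (α := Multiset ℕ) (encode s.val) = some s.val := encodek s.val
  have h' : ((↑) : List ℕ → Multiset ℕ) <$> decode (α := List ℕ) (encode s.val) =
      some s.val := h
  rcases hd : decode (α := List ℕ) (encode s.val) with _ | L
  · rw [hd] at h'; simp at h'
  · rw [hd] at h'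
    simp only [Option.map_eq_map, Option.map_some, Option.some.injEq] at h'
    refine ⟨L, by rw [hes, hd], ?_, fun a => ?_⟩
    · show L.length = Multiset.card s.val
      rw [← h', Multiset.coe_card]
    · constructor
      · intro ha
        have : a ∈ (L : Multiset ℕ) := by exact_mod_cast ha
        rw [h'] at this; exact this
      · intro ha
        have : a ∈ (L : Multiset ℕ) := by rw [h']; exact ha
        exact_mod_cast this

end AuxProof

theorem stmt_6 (r : (ℕ → ℕ) → (ℕ → ℕ) → Prop)
    (hrefl : ∀ f, r f f) (htrans : ∀ f g h, r f g → r g h → r f h)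
    (hT : ∀ f g, TuringLE f g → r f g)
    (hcomp : ∀ f g h, r f h → r g h → r (f ∘ g) h) :
    BInStar r ⊆ DNeStar r := by
  intro x hx
  obtain ⟨σ, hσ, hσx, hcapt⟩ := hx
  refine ⟨yfun σ, htrans _ _ _ (hT _ _ (yfun_turing σ)) hσx, ?_⟩
  intro z hz hdiff
  obtain ⟨N', hN'⟩ := hdiff
  have hzb : IsBasic r (zbar z) := htrans _ _ _ (hT _ _ (zbar_turing z)) hz
  obtain ⟨N, hN⟩ := hcapt (zbar z) hzb
  set n := max N N' + 1 with hn
  have hmem : zbar z n ∈ σ n := hN n (by omega)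
  obtain ⟨L, hdec, hlen, hmemL⟩ := finset_decode (σ n)
  set j := L.idxOf (zbar z n) with hj
  have hjL : j < L.length := List.idxOf_lt_length_iff.2 ((hmemL _).2 hmem)
  have hjn : j < n := lt_of_lt_of_le (hlen ▸ hjL) (hσ n)
  set m := n * n + j with hm
  have hsqrt : m.sqrt = n := Nat.sqrt_add_eq n (by omega)
  have hLj : L.getD j 0 = zbar z n := by
    rw [List.getD_eq_getElem L 0 hjL]
    exact List.getElem_idxOf hjL
  have hy : yfun σ m = z m := by
    have hjm : m - m.sqrt * m.sqrt = j := by rw [hsqrt]; omega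
    rw [yfun, hjm, hsqrt]
    show ((Encodable.decode (α := List ℕ)
      (((Encodable.decode (α := List ℕ) (Encodable.encode (σ n))).getD []).getD j 0)).getD
        []).getD j 0 = z m
    rw [hdec]
    simp only [Option.getD_some, hLj]
    rw [zbar, Encodable.encodek, Option.getD_some]
    have : n * n + j < n * n + n := by omega
    simp [List.getD_eq_getElem?_getD, hjn, hm]
  have hnn : n ≤ n * n := Nat.le_mul_of_pos_left n (by omega)
  exact hN' m (by omega) hy
end
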